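/- Addition is continuous on D(ℝ) × D(ℝ) at every pair (x, y) with Disc(x) ∩ Disc(y) = ∅, where Disc(f) denotes the set of discontinuity points of f; consequently, for any finite family f₁,…,fₙ ∈ D(ℝ) with pairwise disjoint discontinuity sets, if f_k^{(m)} → f_k in the J₁ topology on D(ℝ) as m → ∞ for each k, then Σ_{k=1}^n f_k^{(m)} → Σ_{k=1}^n f_k in the J₁ topology. -/

import Mathlib

/-!
Each `F k m` converges to `f k` along its own time change `lam k m`. On a window around `[a, b]`
the jumps of `f k` of size at least `η` form a finite set `J k`, and these sets are pairwise
disjoint because the discontinuity sets are. Hence a single time change `ν`, a tent-function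
perturbation of the identity, agrees with every `lam k m` on `J k`. Given `u`, pick `s` with
`lam k m s = ν u`; strict monotonicity keeps every point of `J k` out of the interval between `u`
and `s`, so `f k` has only small jumps there and `F k m (ν u) ≈ f k s ≈ f k u`. A diagonal argument
over windows and tolerances produces one sequence of time changes for the sum.
-/

open Filter Topology

/-- `f` is càdlàg: right-continuous with finite left limits at every point. -/
def Cadlag (f : ℝ → ℝ) : Prop :=
  ∀ t : ℝ, ContinuousWithinAt f (Set.Ici t) t ∧
    ∃ l : ℝ, Tendsto f (nhdsWithin t (Set.Iio t)) (𝓝 l)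

/-- The set of discontinuity points of `f`. -/
def Disc (f : ℝ → ℝ) : Set ℝ := {t | ¬ ContinuousAt f t}

/-- Sequential characterization of convergence in the Skorokhod `J₁` topology on `D(ℝ)`. -/
def J1TendstoSeq (f : ℕ → ℝ → ℝ) (g : ℝ → ℝ) : Prop :=
  ∃ lam : ℕ → ℝ → ℝ,
    (∀ n, StrictMono (lam n) ∧ Continuous (lam n) ∧
      Tendsto (lam n) atTop atTop ∧ Tendsto (lam n) atBot atBot) ∧
    ∀ a b : ℝ, a < b →
      Tendsto (fun n => ⨆ u : Set.Icc a b, |f n (lam n ↑u) - g ↑u|) atTop (𝓝 0) ∧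
      Tendsto (fun n => ⨆ u : Set.Icc a b, |lam n ↑u - ↑u|) atTop (𝓝 0)

open Set Function
open scoped Interval

theorem mem_Disc_of_leftLim_ne {f : ℝ → ℝ} {t : ℝ} (h : leftLim f t ≠ f t) : t ∈ Disc f :=
  fun hc => h hc.continuousWithinAt.leftLim_eq

theorem abs_sub_le_of_mem_Ioo_of_jump_lt {f : ℝ → ℝ} {x δ ε : ℝ}
    (hright : ∀ s ∈ Ico x (x + δ), |f s - f x| < ε)
    (hleft : ∀ s ∈ Ioo (x - δ) x, |f s - leftLim f x| < ε) {u v : ℝ}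
    (hu : u ∈ Ioo (x - δ) (x + δ)) (hv : v ∈ Ioo (x - δ) (x + δ)) (huv : u ≤ v)
    (hjump : ∀ t ∈ Ioc u v, |f t - leftLim f t| < ε) : |f v - f u| ≤ 3 * ε := by
  rcases le_or_gt x u with hxu | hux
  · have h₁ := hright u ⟨hxu, hu.2⟩
    have h₂ := hright v ⟨hxu.trans huv, hv.2⟩
    rw [abs_sub_lt_iff] at h₁ h₂; rw [abs_le]; constructor <;> linarith
  rcases lt_or_ge v x with hvx | hxv
  · have h₁ := hleft u ⟨hu.1, hux⟩
    have h₂ := hleft v ⟨hv.1, hvx⟩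
    rw [abs_sub_lt_iff] at h₁ h₂; rw [abs_le]; constructor <;> linarith
  · have h₁ := hleft u ⟨hu.1, hux⟩
    have h₂ := hright v ⟨hxv, hv.2⟩
    have h₃ := hjump x ⟨hux, hxv⟩
    rw [abs_sub_lt_iff] at h₁ h₂ h₃; rw [abs_le]; constructor <;> linarith

namespace Cadlag

variable {f : ℝ → ℝ}

theorem tendsto_leftLim (hf : Cadlag f) (t : ℝ) : Tendsto f (𝓝[<] t) (𝓝 (leftLim f t)) :=
  tendsto_leftLim_of_tendsto (hf t).2

theorem isBounded_image (hf : Cadlag f) {s : Set ℝ} (hs : IsCompact s) :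
    Bornology.IsBounded (f '' s) := by
  refine Bornology.isBounded_image_of_isLocallyBounded_of_isCompact hs fun x => ?_
  obtain ⟨l, hl, hlb⟩ := Metric.exists_isBounded_image_of_tendsto (hf.tendsto_leftLim x)
  obtain ⟨r, hr, hrb⟩ := Metric.exists_isBounded_image_of_tendsto (hf x).1.tendsto
  refine ⟨l ∪ r, ?_, by simpa only [image_union] using hlb.union hrb⟩
  rw [← nhdsLT_sup_nhdsGE]
  exact union_mem_sup hl hr

theorem exists_bound (hf : Cadlag f) {s : Set ℝ} (hs : IsCompact s) :
    ∃ C, ∀ t ∈ s, |f t| ≤ C := by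
  obtain ⟨C, hC⟩ := isBounded_iff_forall_norm_le.1 (hf.isBounded_image hs)
  exact ⟨C, fun t ht => hC _ (mem_image_of_mem f ht)⟩

theorem exists_pos_abs_sub_lt (hf : Cadlag f) (x : ℝ) {ε : ℝ} (hε : 0 < ε) :
    ∃ δ > 0, (∀ s ∈ Ico x (x + δ), |f s - f x| < ε) ∧
      ∀ s ∈ Ioo (x - δ) x, |f s - leftLim f x| < ε := by
  obtain ⟨δ₁, hδ₁, hr⟩ := Metric.continuousWithinAt_iff.1 (hf x).1 ε hε
  obtain ⟨δ₂, hδ₂, hl⟩ := Metric.tendsto_nhdsWithin_nhds.1 (hf.tendsto_leftLim x) ε hε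
  have hδ := min_le_left δ₁ δ₂
  have hδ' := min_le_right δ₁ δ₂
  refine ⟨min δ₁ δ₂, lt_min hδ₁ hδ₂, fun s hs => ?_, fun s hs => ?_⟩
  · exact hr hs.1 (by rw [Real.dist_eq, abs_sub_lt_iff]; constructor <;> linarith [hs.1, hs.2])
  · exact hl hs.2 (by rw [Real.dist_eq, abs_sub_lt_iff]; constructor <;> linarith [hs.1, hs.2])

theorem abs_leftLim_sub_le (hf : Cadlag f) {a s c ε : ℝ} (has : a < s)
    (h : ∀ v ∈ Ioo a s, |f v - c| ≤ ε) : |leftLim f s - c| ≤ ε :=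
  le_of_tendsto ((hf.tendsto_leftLim s).sub_const c).abs
    (eventually_of_mem (Ioo_mem_nhdsLT has) h)

theorem finite_setOf_le_abs_sub_leftLim (hf : Cadlag f) (a b : ℝ) {ε : ℝ} (hε : 0 < ε) :
    {t ∈ Icc a b | ε ≤ |f t - leftLim f t|}.Finite := by
  have hisolated : ∀ x, ∃ U ∈ 𝓝 x, ∀ s ∈ U, s ≠ x → |f s - leftLim f s| < ε := by
    intro x
    obtain ⟨δ, hδ, hright, hleft⟩ := hf.exists_pos_abs_sub_lt x (by positivity : 0 < ε / 3)
    refine ⟨Ioo (x - δ) (x + δ), Ioo_mem_nhds (by linarith) (by linarith), fun s hs hsx => ?_⟩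
    rcases hsx.lt_or_gt with hsx | hxs
    · have h₁ := hleft s ⟨hs.1, hsx⟩
      have h₂ := hf.abs_leftLim_sub_le hs.1 fun v hv => (hleft v ⟨hv.1, hv.2.trans hsx⟩).le
      rw [abs_sub_lt_iff] at h₁ ⊢; rw [abs_le] at h₂
      constructor <;> linarith
    · have h₁ := hright s ⟨hxs.le, hs.2⟩
      have h₂ := hf.abs_leftLim_sub_le hxs fun v hv => (hright v ⟨hv.1.le, hv.2.trans hs.2⟩).le
      rw [abs_sub_lt_iff] at h₁ ⊢; rw [abs_le] at h₂
      constructor <;> linarith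
  choose U hU hUx using hisolated
  obtain ⟨T, -, hTcov⟩ := isCompact_Icc.elim_nhds_subcover U fun x _ => hU x
  refine T.finite_toSet.subset fun t ⟨ht, hjump⟩ => ?_
  obtain ⟨x, hxT, htx⟩ := mem_iUnion₂.1 (hTcov ht)
  by_contra htT
  exact (hUx x t htx (ne_of_mem_of_not_mem hxT htT).symm).not_ge hjump

theorem exists_pos_abs_sub_le_of_jump_lt (hf : Cadlag f) (a b : ℝ) {ε : ℝ} (hε : 0 < ε) :
    ∃ δ > 0, ∀ u ∈ Icc a b, ∀ v, |v - u| < δ →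
      (∀ t ∈ Ι u v, |f t - leftLim f t| < ε) → |f v - f u| ≤ 3 * ε := by
  choose δ hδ hright hleft using fun x => hf.exists_pos_abs_sub_lt x hε
  obtain ⟨η, hη, hcover⟩ := lebesgue_number_lemma_of_metric (c := fun x => Ioo (x - δ x) (x + δ x))
    isCompact_Icc (fun _ => isOpen_Ioo) fun u _ =>
      mem_iUnion.2 ⟨u, by constructor <;> linarith [hδ u]⟩
  refine ⟨η, hη, fun u hu v huv hjump => ?_⟩
  obtain ⟨x, hx⟩ := hcover u hu
  have hu' := hx (Metric.mem_ball_self hη)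
  have hv' := hx (by rwa [Metric.mem_ball, Real.dist_eq])
  rcases le_total u v with h | h
  · exact abs_sub_le_of_mem_Ioo_of_jump_lt (hright x) (hleft x) hu' hv' h
      fun t ht => hjump t (by rwa [uIoc_of_le h])
  · rw [abs_sub_comm]
    exact abs_sub_le_of_mem_Ioo_of_jump_lt (hright x) (hleft x) hv' hu' h
      fun t ht => hjump t (by rwa [uIoc_of_ge h])

end Cadlag

def IsTimeChange (ν : ℝ → ℝ) : Prop :=
  StrictMono ν ∧ Continuous ν ∧ Tendsto ν atTop atTop ∧ Tendsto ν atBot atBot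

theorem IsTimeChange.surjective {ν : ℝ → ℝ} (h : IsTimeChange ν) : Surjective ν :=
  h.2.1.surjective h.2.2.1 h.2.2.2

theorem isTimeChange_of_abs_sub_le {ν : ℝ → ℝ} {c : ℝ} (hmono : StrictMono ν)
    (hcont : Continuous ν) (hdev : ∀ u, |ν u - u| ≤ c) : IsTimeChange ν :=
  ⟨hmono, hcont,
    tendsto_atTop_mono (fun u => by dsimp only [id]; linarith [(abs_le.1 (hdev u)).1])
      (tendsto_atTop_add_const_right _ (-c) tendsto_id),
    tendsto_atBot_mono (fun u => by dsimp only [id]; linarith [(abs_le.1 (hdev u)).2])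
      (tendsto_atBot_add_const_right _ c tendsto_id)⟩

theorem notMem_uIoc_of_apply_eq {α β : Type*} [LinearOrder α] [Preorder β] {ν μ : α → β}
    (hν : StrictMono ν) (hμ : StrictMono μ) {u s t : α} (hs : μ s = ν u) (ht : μ t = ν t) :
    t ∉ Ι u s := by
  intro ht'
  rcases mem_uIoc.1 ht' with ⟨hut, hts⟩ | ⟨hst, htu⟩
  · exact (hν hut).not_ge (ht ▸ hs ▸ hμ.monotone hts)
  · exact (hμ hst).not_ge (hs ▸ ht ▸ hν.monotone htu)

theorem abs_sub_le_of_apply_eq {μ : ℝ → ℝ} (hμ : StrictMono μ) {u s w r : ℝ} (hs : μ s = w)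
    (hw : |w - u| ≤ r) (hlo : |μ (u - 2 * r) - (u - 2 * r)| ≤ r)
    (hhi : |μ (u + 2 * r) - (u + 2 * r)| ≤ r) : |s - u| ≤ 2 * r := by
  rw [abs_le] at hw hlo hhi
  have h₁ : u - 2 * r ≤ s := hμ.le_iff_le.1 (by linarith)
  have h₂ : s ≤ u + 2 * r := hμ.le_iff_le.1 (by linarith)
  rw [abs_le]; constructor <;> linarith

noncomputable def tent (d p u : ℝ) : ℝ := max 0 (1 - |u - p| / d)

section Tent

variable {d : ℝ}

theorem tent_nonneg (d p u : ℝ) : 0 ≤ tent d p u := le_max_left _ _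

theorem tent_le_one (hd : 0 < d) (p u : ℝ) : tent d p u ≤ 1 :=
  max_le zero_le_one (by linarith [div_nonneg (abs_nonneg (u - p)) hd.le])

theorem tent_self (d p : ℝ) : tent d p p = 1 := by simp [tent]

theorem abs_sub_lt_of_tent_ne_zero {p u : ℝ} (hd : 0 < d) (h : tent d p u ≠ 0) :
    |u - p| < d := by
  by_contra! hdu
  exact h (max_eq_left (by linarith [(one_le_div hd).2 hdu]))

theorem continuous_tent (d p : ℝ) : Continuous (tent d p) := by
  unfold tent; fun_prop

theorem abs_tent_sub_tent_le (hd : 0 < d) (p u v : ℝ) :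
    |tent d p v - tent d p u| ≤ |v - u| / d := by
  have h : |tent d p v - tent d p u| ≤ |(1 - |v - p| / d) - (1 - |u - p| / d)| := by
    simpa only [tent, max_comm (0 : ℝ)] using abs_max_sub_max_le_abs _ _ (0 : ℝ)
  rw [show (1 - |v - p| / d) - (1 - |u - p| / d) = (|u - p| - |v - p|) / d by ring, abs_div,
    abs_of_pos hd] at h
  refine h.trans (div_le_div_of_nonneg_right ?_ hd.le)
  calc |(|u - p| - |v - p|)| ≤ |(u - p) - (v - p)| := abs_abs_sub_abs_le_abs_sub _ _
    _ = |v - u| := by rw [sub_sub_sub_cancel_right, abs_sub_comm]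

variable {P : Finset ℝ}

theorem card_filter_tent_ne_zero_le_one (hd : 0 < d)
    (hsep : (P : Set ℝ).Pairwise fun p q => 2 * d ≤ |p - q|) (u : ℝ) :
    (P.filter fun p => tent d p u ≠ 0).card ≤ 1 := by
  refine Finset.card_le_one.2 fun p hp q hq => ?_
  rw [Finset.mem_filter] at hp hq
  by_contra hpq
  have := abs_sub_le p u q
  rw [abs_sub_comm p u] at this
  linarith [hsep hp.1 hq.1 hpq, abs_sub_lt_of_tent_ne_zero hd hp.2,
    abs_sub_lt_of_tent_ne_zero hd hq.2]

theorem abs_sum_mul_tent_le {a : ℝ → ℝ} {c : ℝ} (hd : 0 < d) (hc : 0 ≤ c)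
    (hsep : (P : Set ℝ).Pairwise fun p q => 2 * d ≤ |p - q|) (ha : ∀ p ∈ P, |a p| ≤ c) (u : ℝ) :
    |∑ p ∈ P, a p * tent d p u| ≤ c := by
  rw [← Finset.sum_filter_of_ne fun p _ h => right_ne_zero_of_mul h]
  calc _ ≤ ∑ p ∈ P.filter (fun p => tent d p u ≠ 0), |a p * tent d p u| :=
        Finset.abs_sum_le_sum_abs _ _
    _ ≤ (P.filter fun p => tent d p u ≠ 0).card • c := by
        refine Finset.sum_le_card_nsmul _ _ _ fun p hp => ?_
        rw [abs_mul, abs_of_nonneg (tent_nonneg d p u)]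
        exact (mul_le_of_le_one_right (abs_nonneg _) (tent_le_one hd p u)).trans
          (ha p (Finset.mem_filter.1 hp).1)
    _ ≤ 1 • c := by gcongr; exact card_filter_tent_ne_zero_le_one hd hsep u
    _ = c := one_smul _ _

theorem sum_abs_tent_sub_tent_le (hd : 0 < d)
    (hsep : (P : Set ℝ).Pairwise fun p q => 2 * d ≤ |p - q|) {u v : ℝ} (huv : u ≤ v) :
    ∑ p ∈ P, |tent d p v - tent d p u| ≤ 2 * min 1 ((v - u) / d) := by
  have hcard : (P.filter fun p => tent d p u ≠ 0 ∨ tent d p v ≠ 0).card ≤ 2 := by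
    rw [Finset.filter_or]
    linarith [Finset.card_union_le (P.filter fun p => tent d p u ≠ 0)
      (P.filter fun p => tent d p v ≠ 0), card_filter_tent_ne_zero_le_one hd hsep u,
      card_filter_tent_ne_zero_le_one hd hsep v]
  rw [← Finset.sum_filter_of_ne (p := fun p => tent d p u ≠ 0 ∨ tent d p v ≠ 0)
    fun p _ h => by contrapose! h; simp [h.1, h.2] ]
  calc _ ≤ (P.filter fun p => tent d p u ≠ 0 ∨ tent d p v ≠ 0).card • min 1 ((v - u) / d) := by
        refine Finset.sum_le_card_nsmul _ _ _ fun p _ => le_min ?_ ?_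
        · exact abs_sub_le_of_nonneg_of_le (tent_nonneg d p v) (tent_le_one hd p v)
            (tent_nonneg d p u) (tent_le_one hd p u)
        · simpa only [abs_of_nonneg (sub_nonneg.2 huv)] using abs_tent_sub_tent_le hd p u v
    _ ≤ 2 * min 1 ((v - u) / d) := by
        rw [nsmul_eq_mul]
        gcongr
        exact_mod_cast hcard

noncomputable def tentInterp (P : Finset ℝ) (g : ℝ → ℝ) (d u : ℝ) : ℝ :=
  u + ∑ p ∈ P, (g p - p) * tent d p u

variable {g : ℝ → ℝ} {c : ℝ}

theorem continuous_tentInterp (P : Finset ℝ) (g : ℝ → ℝ) (d : ℝ) :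
    Continuous (tentInterp P g d) :=
  continuous_id.add (continuous_finsetSum _ fun p _ => continuous_const.mul (continuous_tent d p))

theorem tentInterp_apply_of_mem (hd : 0 < d)
    (hsep : (P : Set ℝ).Pairwise fun p q => 2 * d ≤ |p - q|) {p : ℝ} (hp : p ∈ P) :
    tentInterp P g d p = g p := by
  rw [tentInterp, Finset.sum_eq_single p (fun q hq hqp => ?_) (absurd hp), tent_self]
  · ring
  by_contra h
  linarith [hsep hp hq hqp.symm, abs_sub_lt_of_tent_ne_zero hd (right_ne_zero_of_mul h)]

theorem abs_tentInterp_sub_le (hd : 0 < d) (hc : 0 ≤ c)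
    (hsep : (P : Set ℝ).Pairwise fun p q => 2 * d ≤ |p - q|) (hg : ∀ p ∈ P, |g p - p| ≤ c)
    (u : ℝ) : |tentInterp P g d u - u| ≤ c := by
  simpa [tentInterp] using abs_sum_mul_tent_le hd hc hsep hg u

theorem strictMono_tentInterp (hd : 0 < d) (hc : 0 ≤ c) (hcd : 2 * c < d)
    (hsep : (P : Set ℝ).Pairwise fun p q => 2 * d ≤ |p - q|) (hg : ∀ p ∈ P, |g p - p| ≤ c) :
    StrictMono (tentInterp P g d) := by
  intro u v huv
  have hpert : |∑ p ∈ P, (g p - p) * tent d p v - ∑ p ∈ P, (g p - p) * tent d p u|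
      ≤ c * (2 * min 1 ((v - u) / d)) := by
    rw [← Finset.sum_sub_distrib]
    calc _ ≤ ∑ p ∈ P, |(g p - p) * tent d p v - (g p - p) * tent d p u| :=
          Finset.abs_sum_le_sum_abs _ _
      _ ≤ ∑ p ∈ P, c * |tent d p v - tent d p u| := Finset.sum_le_sum fun p hp => by
          rw [← mul_sub, abs_mul]
          exact mul_le_mul_of_nonneg_right (hg p hp) (abs_nonneg _)
      _ ≤ c * (2 * min 1 ((v - u) / d)) := by
          rw [← Finset.mul_sum]
          exact mul_le_mul_of_nonneg_left (sum_abs_tent_sub_tent_le hd hsep huv.le) hc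
  have hsmall : c * (2 * min 1 ((v - u) / d)) < v - u := by
    have huv' : 0 < v - u := sub_pos.2 huv
    rcases le_total (v - u) d with h | h
    · calc c * (2 * min 1 ((v - u) / d)) ≤ 2 * c * ((v - u) / d) := by
            nlinarith [min_le_right 1 ((v - u) / d)]
        _ < d * ((v - u) / d) := by gcongr
        _ = v - u := by field_simp
    · nlinarith [min_le_left 1 ((v - u) / d)]
  unfold tentInterp
  linarith [(abs_le.1 hpert).1]

end Tent

theorem exists_isTimeChange_eqOn {P : Finset ℝ} {g : ℝ → ℝ} {c : ℝ} (hc : 0 < c)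
    (hsep : (P : Set ℝ).Pairwise fun p q => 6 * c ≤ |p - q|) (hg : ∀ p ∈ P, |g p - p| ≤ c) :
    ∃ ν, IsTimeChange ν ∧ (∀ u, |ν u - u| ≤ c) ∧ ∀ p ∈ P, ν p = g p := by
  have hd : 0 < 3 * c := by positivity
  have hsep' : (P : Set ℝ).Pairwise fun p q => 2 * (3 * c) ≤ |p - q| :=
    hsep.imp fun p q h => by linarith
  have hdev := abs_tentInterp_sub_le hd hc.le hsep' hg
  exact ⟨_, isTimeChange_of_abs_sub_le (strictMono_tentInterp hd hc.le (by linarith) hsep' hg)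
    (continuous_tentInterp P g _) hdev, hdev, fun p hp => tentInterp_apply_of_mem hd hsep' hp⟩

theorem abs_comp_sub_le_of_eq_on_jumps {f G μ ν : ℝ → ℝ} {a b r η δ : ℝ}
    (hμ : IsTimeChange μ) (hν : StrictMono ν) (hνdev : ∀ u, |ν u - u| ≤ r)
    (hr : 2 * r ≤ 1) (hrδ : 2 * r < δ)
    (hosc : ∀ u ∈ Icc a b, ∀ v, |v - u| < δ →
      (∀ t ∈ Ι u v, |f t - leftLim f t| < η) → |f v - f u| ≤ 3 * η)
    (hjump : ∀ t ∈ Icc (a - 1) (b + 1), η ≤ |f t - leftLim f t| → ν t = μ t)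
    (hμdev : ∀ t ∈ Icc (a - 1) (b + 1), |μ t - t| ≤ r)
    (hGμ : ∀ t ∈ Icc (a - 1) (b + 1), |G (μ t) - f t| ≤ η) :
    ∀ u ∈ Icc a b, |G (ν u) - f u| ≤ 4 * η := by
  intro u hu
  have hr₀ : 0 ≤ r := (abs_nonneg _).trans (hνdev 0)
  have hwindow : ∀ t, |t - u| ≤ 2 * r → t ∈ Icc (a - 1) (b + 1) := fun t ht => by
    rw [abs_le] at ht
    exact ⟨by linarith [hu.1], by linarith [hu.2]⟩
  obtain ⟨s, hs⟩ := hμ.surjective (ν u)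
  have hsu : |s - u| ≤ 2 * r := abs_sub_le_of_apply_eq hμ.1 hs (hνdev u)
    (hμdev _ (hwindow _ (by simp [abs_of_nonneg hr₀])))
    (hμdev _ (hwindow _ (by simp [abs_of_nonneg hr₀])))
  have hsmall : ∀ t ∈ Ι u s, |f t - leftLim f t| < η := by
    intro t ht
    by_contra! hbig
    have htu : |t - u| ≤ 2 * r :=
      (abs_sub_left_of_mem_uIcc (uIoc_subset_uIcc ht)).trans hsu
    exact notMem_uIoc_of_apply_eq hν hμ.1 hs (hjump t (hwindow t htu) hbig).symm ht
  have hfs : |f s - f u| ≤ 3 * η := hosc u hu s (by linarith) hsmall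
  calc |G (ν u) - f u| ≤ |G (μ s) - f s| + |f s - f u| := hs ▸ abs_sub_le _ _ _
    _ ≤ 4 * η := by linarith [hGμ s (hwindow s hsu)]

theorem eventually_forall_le_of_tendsto_iSup {φ : ℕ → ℝ → ℝ} {s : Set ℝ}
    (hb : ∀ m, BddAbove (φ m '' s)) (h : Tendsto (fun m => ⨆ u : s, φ m u) atTop (𝓝 0))
    {r : ℝ} (hr : 0 < r) : ∀ᶠ m in atTop, ∀ u ∈ s, φ m u ≤ r := by
  filter_upwards [h.eventually (gt_mem_nhds hr)] with m hm u hu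
  exact (le_ciSup (by rw [← image_eq_range]; exact hb m) (⟨u, hu⟩ : s)).trans hm.le

theorem eventually_abs_sub_le_of_tendsto_iSup {F : ℕ → ℝ → ℝ} {f : ℝ → ℝ}
    {lam : ℕ → ℝ → ℝ} (hF : ∀ m, Cadlag (F m)) (hf : Cadlag f) (hlam : ∀ m, Continuous (lam m))
    (hsup : ∀ a b : ℝ, a < b →
      Tendsto (fun m => ⨆ u : Icc a b, |F m (lam m u) - f u|) atTop (𝓝 0) ∧
      Tendsto (fun m => ⨆ u : Icc a b, |lam m u - u|) atTop (𝓝 0))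
    (a b : ℝ) {r : ℝ} (hr : 0 < r) :
    ∀ᶠ m in atTop, ∀ t ∈ Icc a b, |lam m t - t| ≤ r ∧ |F m (lam m t) - f t| ≤ r := by
  set b' := max b (a + 1)
  have hab : a < b' := by linarith [le_max_right b (a + 1)]
  have hsub : Icc a b ⊆ Icc a b' := Icc_subset_Icc_right (le_max_left _ _)
  -- In `ℝ`, `⨆` of an unbounded family is `0`, so the suprema only carry information once bounded.
  have hbF : ∀ m, BddAbove ((fun t => |F m (lam m t) - f t|) '' Icc a b') := by
    intro m
    obtain ⟨C, hC⟩ := (hF m).exists_bound (isCompact_Icc.image (hlam m))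
    obtain ⟨D, hD⟩ := hf.exists_bound (isCompact_Icc (a := a) (b := b'))
    refine ⟨C + D, forall_mem_image.2 fun t ht => ?_⟩
    linarith [abs_sub (F m (lam m t)) (f t), hC _ (mem_image_of_mem _ ht), hD t ht]
  have hbdev : ∀ m, BddAbove ((fun t => |lam m t - t|) '' Icc a b') := fun m =>
    (isCompact_Icc.image ((hlam m).sub continuous_id).abs).bddAbove
  filter_upwards [eventually_forall_le_of_tendsto_iSup hbdev (hsup a b' hab).2 hr,
    eventually_forall_le_of_tendsto_iSup hbF (hsup a b' hab).1 hr] with m hdev hval t ht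
  exact ⟨hdev t (hsub ht), hval t (hsub ht)⟩

theorem eventually_mul_lt (c : ℝ) {x : ℝ} (hx : 0 < x) : ∀ᶠ r in 𝓝 (0 : ℝ), c * r < x :=
  ((continuous_const_mul c).tendsto' 0 0 (mul_zero c)).eventually (gt_mem_nhds hx)

theorem Finset.eventually_pairwise_mul_le_abs_sub (P : Finset ℝ) (c : ℝ) :
    ∀ᶠ r in 𝓝 (0 : ℝ), (P : Set ℝ).Pairwise fun p q => c * r ≤ |p - q| := by
  have h : ∀ᶠ r in 𝓝 (0 : ℝ), ∀ p ∈ P, ∀ q ∈ P, p ≠ q → c * r ≤ |p - q| := by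
    refine (eventually_all_finset P).2 fun p _ => (eventually_all_finset P).2 fun q _ => ?_
    by_cases hpq : p = q
    · exact Eventually.of_forall fun _ h => (h hpq).elim
    · filter_upwards [eventually_mul_lt c (abs_pos.2 (sub_ne_zero.2 hpq))] with r hr _
      exact hr.le
  exact h.mono fun r hr p hp q hq => hr p hp q hq

theorem exists_isTimeChange_eqOn_iUnion {ι : Type*} [Fintype ι]
    {J : ι → Finset ℝ} {μ : ι → ℝ → ℝ} {r : ℝ} (hr : 0 < r)
    (hJ : ∀ k j t, t ∈ J k → t ∈ J j → k = j)
    (hsep : ((Finset.univ.biUnion J : Finset ℝ) : Set ℝ).Pairwise fun p q => 6 * r ≤ |p - q|)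
    (hμ : ∀ k, ∀ t ∈ J k, |μ k t - t| ≤ r) :
    ∃ ν, IsTimeChange ν ∧ (∀ u, |ν u - u| ≤ r) ∧ ∀ k, ∀ t ∈ J k, ν t = μ k t := by
  classical
  let g t := if h : ∃ k, t ∈ J k then μ h.choose t else t
  have hg : ∀ k, ∀ t ∈ J k, g t = μ k t := fun k t ht => by
    have h : ∃ k, t ∈ J k := ⟨k, ht⟩
    simp only [g, dif_pos h, hJ _ _ _ h.choose_spec ht]
  obtain ⟨ν, hν, hdev, hνg⟩ := exists_isTimeChange_eqOn hr hsep fun t ht => by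
    obtain ⟨k, -, hk⟩ := Finset.mem_biUnion.1 ht
    exact hg k t hk ▸ hμ k t hk
  exact ⟨ν, hν, hdev, fun k t ht =>
    (hνg t (Finset.mem_biUnion.2 ⟨k, Finset.mem_univ k, ht⟩)).trans (hg k t ht)⟩

theorem exists_finset_large_jumps {ι : Type*} {f : ι → ℝ → ℝ}
    (hcad : ∀ k, Cadlag (f k)) (hdisj : ∀ k j, k ≠ j → Disjoint (Disc (f k)) (Disc (f j)))
    (a b : ℝ) {η : ℝ} (hη : 0 < η) :
    ∃ J : ι → Finset ℝ, (∀ k, ∀ t ∈ J k, t ∈ Icc a b) ∧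
      (∀ k t, t ∈ Icc a b → η ≤ |f k t - leftLim (f k) t| → t ∈ J k) ∧
      ∀ k j t, t ∈ J k → t ∈ J j → k = j := by
  refine ⟨fun k => ((hcad k).finite_setOf_le_abs_sub_leftLim a b hη).toFinset,
    fun k t ht => ((Set.Finite.mem_toFinset _).1 ht).1,
    fun k t ht hbig => (Set.Finite.mem_toFinset _).2 ⟨ht, hbig⟩, fun k j t hk hj => ?_⟩
  have hdisc : ∀ i, t ∈ ((hcad i).finite_setOf_le_abs_sub_leftLim a b hη).toFinset →
      t ∈ Disc (f i) := fun i hi =>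
    mem_Disc_of_leftLim_ne fun h => by
      have := ((Set.Finite.mem_toFinset _).1 hi).2
      rw [h, sub_self, abs_zero] at this
      linarith
  by_contra hkj
  exact Set.disjoint_left.1 (hdisj k j hkj) (hdisc k hk) (hdisc j hj)

theorem eventually_exists_isTimeChange_abs_sum_sub_le {n : ℕ} {f : Fin n → ℝ → ℝ}
    {F : Fin n → ℕ → ℝ → ℝ} (hcad : ∀ k, Cadlag (f k)) (hcadF : ∀ k m, Cadlag (F k m))
    (hdisj : ∀ k j, k ≠ j → Disjoint (Disc (f k)) (Disc (f j)))
    (hconv : ∀ k, J1TendstoSeq (F k) (f k)) (a b : ℝ) {ε : ℝ} (hε : 0 < ε) :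
    ∀ᶠ m in atTop, ∃ ν, IsTimeChange ν ∧ (∀ u, |ν u - u| ≤ ε) ∧
      ∀ u ∈ Icc a b, |∑ k, F k m (ν u) - ∑ k, f k u| ≤ ε := by
  choose lam hlam hsup using hconv
  set η := ε / (4 * (n + 1))
  have hη : 0 < η := by positivity
  have hnη : n * (4 * η) ≤ ε := by
    rw [show (n : ℝ) * (4 * η) = ε * n / (n + 1) by simp only [η]; field_simp,
      div_le_iff₀ (by positivity)]
    nlinarith
  obtain ⟨J, hJW, hJ, hJdisj⟩ := exists_finset_large_jumps hcad hdisj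
    (a - 1) (b + 1) hη
  choose δ hδ hosc using fun k => (hcad k).exists_pos_abs_sub_le_of_jump_lt a b hη
  obtain ⟨r, ⟨hrsep, hr1, hrε, hrδ⟩, hr⟩ : ∃ r, (((Finset.univ.biUnion J : Finset ℝ) :
      Set ℝ).Pairwise (fun p q => 6 * r ≤ |p - q|) ∧ 2 * r < 1 ∧ r < ε ∧ ∀ k, 2 * r < δ k) ∧
      0 < r :=
    ((((Finset.univ.biUnion J).eventually_pairwise_mul_le_abs_sub 6).and
      ((eventually_mul_lt 2 one_pos).and ((eventually_lt_nhds hε).and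
        (eventually_all.2 fun k => eventually_mul_lt 2 (hδ k))))).filter_mono
      nhdsWithin_le_nhds |>.and self_mem_nhdsWithin).exists (f := 𝓝[>] 0)
  have hunif := fun (k : Fin n) (ρ : ℝ) (hρ : 0 < ρ) => eventually_abs_sub_le_of_tendsto_iSup
    (hcadF k) (hcad k) (fun m => (hlam k m).2.1) (hsup k) (a - 1) (b + 1) hρ
  filter_upwards [eventually_all.2 fun k => hunif k r hr, eventually_all.2 fun k => hunif k η hη]
    with m hmr hmη
  obtain ⟨ν, hν, hνdev, hνJ⟩ := exists_isTimeChange_eqOn_iUnion hr hJdisj hrsep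
    fun k t ht => (hmr k t (hJW k t ht)).1
  refine ⟨ν, hν, fun u => (hνdev u).trans hrε.le, fun u hu => ?_⟩
  have hk : ∀ k, |F k m (ν u) - f k u| ≤ 4 * η := fun k =>
    abs_comp_sub_le_of_eq_on_jumps (hlam k m) hν.1 hνdev hr1.le (hrδ k) (hosc k)
      (fun t ht hbig => hνJ k t (hJ k t ht hbig)) (fun t ht => (hmr k t ht).1)
      (fun t ht => (hmη k t ht).2) u hu
  calc |∑ k, F k m (ν u) - ∑ k, f k u| ≤ ∑ k, |F k m (ν u) - f k u| := by
        rw [← Finset.sum_sub_distrib]; exact Finset.abs_sum_le_sum_abs _ _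
    _ ≤ ∑ _k : Fin n, 4 * η := Finset.sum_le_sum fun k _ => hk k
    _ ≤ ε := by simpa using hnη

theorem exists_seq_forall_eventually {β : Type*} [Nonempty β] {Q : ℕ → ℕ → β → Prop}
    (hQ : ∀ {i j} m x, i ≤ j → Q j m x → Q i m x) (h : ∀ j, ∀ᶠ m in atTop, ∃ x, Q j m x) :
    ∃ x : ℕ → β, ∀ j, ∀ᶠ m in atTop, Q j m (x m) := by
  classical
  let N m := Nat.findGreatest (fun j => ∃ x, Q j m x) m
  have hchoice : ∀ m, ∃ x, (∃ y, Q (N m) m y) → Q (N m) m x := fun m => by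
    by_cases hm : ∃ y, Q (N m) m y
    · exact hm.imp fun y hy _ => hy
    · exact ⟨Classical.arbitrary β, fun h' => (hm h').elim⟩
  choose x hx using hchoice
  refine ⟨x, fun j => ?_⟩
  filter_upwards [h j, eventually_ge_atTop j] with m hm hjm
  exact hQ m _ (Nat.le_findGreatest hjm hm)
    (hx m (Nat.findGreatest_spec (P := fun j => ∃ x, Q j m x) hjm hm))

theorem tendsto_iSup_Icc_of_eventually_le {φ : ℕ → ℝ → ℝ} (h₀ : ∀ m u, 0 ≤ φ m u)
    (h : ∀ j : ℕ, ∀ᶠ m in atTop, ∀ u ∈ Icc (-j : ℝ) j, φ m u ≤ 1 / (j + 1)) (a b : ℝ) :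
    Tendsto (fun m => ⨆ u : Icc a b, φ m u) atTop (𝓝 0) := by
  refine tendsto_order.2 ⟨fun e he => Eventually.of_forall fun m =>
    he.trans_le (Real.iSup_nonneg fun u => h₀ m u), fun e he => ?_⟩
  obtain ⟨j, hje, hja, hjb⟩ : ∃ j : ℕ, 1 / ((j : ℝ) + 1) < e ∧ -a ≤ j ∧ b ≤ j :=
    ((tendsto_one_div_add_atTop_nhds_zero_nat.eventually (gt_mem_nhds he)).and
      ((tendsto_natCast_atTop_atTop.eventually_ge_atTop (-a)).and
        (tendsto_natCast_atTop_atTop.eventually_ge_atTop b))).exists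
  filter_upwards [h j] with m hm
  exact (Real.iSup_le (fun u : Icc a b => hm u ⟨by linarith [u.2.1], by linarith [u.2.2]⟩)
    (by positivity)).trans_lt hje

theorem j1TendstoSeq_of_eventually_exists {G : ℕ → ℝ → ℝ} {g : ℝ → ℝ}
    (h : ∀ a b ε, 0 < ε → ∀ᶠ m in atTop, ∃ ν, IsTimeChange ν ∧ (∀ u, |ν u - u| ≤ ε) ∧
      ∀ u ∈ Icc a b, |G m (ν u) - g u| ≤ ε) :
    J1TendstoSeq G g := by
  have : Nonempty {ν // IsTimeChange ν} :=
    ⟨⟨id, strictMono_id, continuous_id, tendsto_id, tendsto_id⟩⟩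
  obtain ⟨ν, hν⟩ := exists_seq_forall_eventually (β := {ν // IsTimeChange ν})
    (Q := fun j m ν => (∀ u, |ν.1 u - u| ≤ 1 / (j + 1)) ∧
      ∀ u ∈ Icc (-j : ℝ) j, |G m (ν.1 u) - g u| ≤ 1 / (j + 1))
    (fun {i j} m ν hij hQ => by
      have hle : 1 / ((j : ℝ) + 1) ≤ 1 / (i + 1) := by gcongr
      have hsub : Icc (-i : ℝ) i ⊆ Icc (-j : ℝ) j := Icc_subset_Icc (by simpa) (by simpa)
      exact ⟨fun u => (hQ.1 u).trans hle, fun u hu => (hQ.2 u (hsub hu)).trans hle⟩)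
    fun j => (h (-j) j _ (by positivity)).mono fun m ⟨ν, hν, hdev, hclose⟩ =>
      ⟨⟨ν, hν⟩, hdev, hclose⟩
  refine ⟨fun m => ν m, fun m => (ν m).2, fun a b _ => ⟨?_, ?_⟩⟩
  · exact tendsto_iSup_Icc_of_eventually_le (fun _ _ => abs_nonneg _)
      (fun j => (hν j).mono fun _ hm => hm.2) a b
  · exact tendsto_iSup_Icc_of_eventually_le (fun _ _ => abs_nonneg _)
      (fun j => (hν j).mono fun _ hm u _ => hm.1 u) a b

theorem stmt7 (n : ℕ) (f : Fin n → ℝ → ℝ) (F : Fin n → ℕ → ℝ → ℝ)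
    (hcad : ∀ k, Cadlag (f k)) (hcadF : ∀ k m, Cadlag (F k m))
    (hdisj : ∀ k j, k ≠ j → Disjoint (Disc (f k)) (Disc (f j)))
    (hconv : ∀ k, J1TendstoSeq (F k) (f k)) :
    J1TendstoSeq (fun m x => ∑ k, F k m x) (fun x => ∑ k, f k x) :=
  j1TendstoSeq_of_eventually_exists fun a b _ hε =>
    eventually_exists_isTimeChange_abs_sum_sub_le hcad hcadF hdisj hconv a b hε
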